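/- For a psh function φ on a complex manifold X and compact K ⊂ X, c_K(φ) = inf_{z ∈ K} c_{{z}}(φ), and the function z ↦ c_{{z}}(φ) is lower semicontinuous on X; in particular, if c_K(φ) ≤ 1 then there exists z_0 ∈ K with c_{{z_0}}(φ) ≤ 1. -/

import Mathlib

set_option synthInstance.maxHeartbeats 1000000
set_option maxHeartbeats 1000000
open Filter MeasureTheory Topology
noncomputable section

abbrev Cn (n : ℕ) := EuclideanSpace ℂ (Fin n)

instance (n : ℕ) : MeasureSpace (Cn n) where
  toMeasurableSpace := inferInstance
  volume := Measure.map (MeasurableEquiv.toLp 2 (Fin n → ℂ))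
    (MeasureTheory.MeasureSpace.pi (α := fun _ : Fin n => ℂ)).volume

/-- Mean value of an `EReal`-valued function over a circle
`θ ↦ a + e^{iθ}·b`, computed as the decreasing limit of the averages of the
truncations `max(φ, -m)`. -/
def circleAvg {n : ℕ} (φ : Cn n → EReal) (a b : Cn n) : EReal :=
  ⨅ m : ℕ,
    (((⨍ θ in Set.Ioc (0 : ℝ) (2 * Real.pi),
      ((φ (a + (Complex.exp (θ * Complex.I)) • b)) ⊔ ((-(m : ℝ) : ℝ) : EReal)).toReal) : ℝ) :
        EReal)

/-- `φ : Ω → [-∞, ∞)` is plurisubharmonic on `Ω`: upper semicontinuous, and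
satisfying the sub-mean value inequality on every complex disc contained in `Ω`. -/
def PshOn {n : ℕ} (φ : Cn n → EReal) (Ω : Set (Cn n)) : Prop :=
  UpperSemicontinuousOn φ Ω ∧ (∀ z ∈ Ω, φ z ≠ ⊤) ∧
  ∀ a ∈ Ω, ∀ b : Cn n, (∀ w : ℂ, ‖w‖ ≤ 1 → a + w • b ∈ Ω) →
    φ a ≤ circleAvg φ a b

/-- The complex Hessian `(∂²φ/∂z_j∂z̄_k)` of a real-valued function on `ℂⁿ`,
expressed through real second-order directional derivatives. -/
def cHessEntry {n : ℕ} (φ : Cn n → ℝ) (z : Cn n) (j k : Fin n) : ℂ :=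
  (1 / 4 : ℂ) *
    (((iteratedFDeriv ℝ 2 φ z ![EuclideanSpace.single j (1 : ℂ), EuclideanSpace.single k 1]
        + iteratedFDeriv ℝ 2 φ z
            ![Complex.I • EuclideanSpace.single j (1 : ℂ),
              Complex.I • EuclideanSpace.single k 1] : ℝ) : ℂ)
      + Complex.I *
        ((iteratedFDeriv ℝ 2 φ z
            ![Complex.I • EuclideanSpace.single j (1 : ℂ), EuclideanSpace.single k 1]
          - iteratedFDeriv ℝ 2 φ z
              ![EuclideanSpace.single j (1 : ℂ),
                Complex.I • EuclideanSpace.single k 1] : ℝ) : ℂ))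

/-- The Monge-Ampère measure `(dd^c φ)ⁿ` of a `C²` function, normalized so that
`(dd^c log|z|)ⁿ = δ₀`: it has density `(n!·2ⁿ/πⁿ)·det(∂²φ/∂z_j∂z̄_k)` with respect
to Lebesgue measure. -/
def smoothMA {n : ℕ} (φ : Cn n → ℝ) : Measure (Cn n) :=
  volume.withDensity fun z =>
    ENNReal.ofReal (((Nat.factorial n : ℝ) * 2 ^ n / Real.pi ^ n) *
      (Matrix.det (Matrix.of (cHessEntry φ z))).re)

/-- `μ` is the Monge-Ampère measure `(dd^c φ)ⁿ` of the plurisubharmonic function `φ`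
on `Ω`: `μ` is the weak limit on `Ω` of the Monge-Ampère measures of some decreasing
sequence of smooth plurisubharmonic functions converging pointwise to `φ` on `Ω`. -/
def IsMAMeasure {n : ℕ} (Ω : Set (Cn n)) (φ : Cn n → EReal) (μ : Measure (Cn n)) : Prop :=
  ∃ φk : ℕ → Cn n → ℝ,
    (∀ k, ContDiff ℝ 2 (φk k)) ∧
    (∀ k, PshOn (fun z => ((φk k z : ℝ) : EReal)) Ω) ∧
    (∀ z ∈ Ω, Antitone fun k => φk k z) ∧
    (∀ z ∈ Ω, Tendsto (fun k => ((φk k z : ℝ) : EReal)) atTop (𝓝 (φ z))) ∧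
    ∀ f : Cn n → ℝ, Continuous f → HasCompactSupport f → tsupport f ⊆ Ω →
      Tendsto (fun k => ∫ z, f z ∂(smoothMA (φk k))) atTop (𝓝 (∫ z, f z ∂μ))

/-- The weight `e^{-2c·φ(z)}` as a value in `[0,∞]`, equal to `∞` at poles of `φ`. -/
def expw (c : ℝ) (x : EReal) : ENNReal :=
  if x = ⊥ then ⊤ else ENNReal.ofReal (Real.exp (-2 * c * x.toReal))

/-- The complex singularity exponent `c_K(φ)`: the supremum of the `c ≥ 0` such that
`e^{-2cφ}` is integrable on a neighborhood of `K`. -/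
def cse {n : ℕ} (φ : Cn n → EReal) (K : Set (Cn n)) : ENNReal :=
  sSup {c : ENNReal | ∃ r : ℝ, 0 ≤ r ∧ c = ENNReal.ofReal r ∧
    ∃ U, IsOpen U ∧ K ⊆ U ∧ ∫⁻ z in U, expw r (φ z) < ⊤}

/-!
Integrability of `e^{-2rφ}` near a compact set is a local condition. Given
`c < r < inf_{z ∈ K} c_{{z}}(φ)`, each `z ∈ K` has a neighbourhood on which `e^{-2r'φ}` is
integrable for some `r' ≥ r`, hence so is `e^{-2rφ} ≤ 1 + e^{-2r'φ}` on a smaller neighbourhood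
of finite volume, and finitely many of these cover `K`. An open set witnessing `c < c_{{z}}(φ)`
witnesses `c < c_{{w}}(φ)` for each of its points `w`, which is lower semicontinuity, and a lower
semicontinuous function attains its infimum on a nonempty compact set.
-/

instance (n : ℕ) : IsFiniteMeasureOnCompacts (volume : Measure (Cn n)) :=
  Measure.IsFiniteMeasureOnCompacts.map _ (PiLp.homeomorph 2 fun _ : Fin n => ℂ).symm

theorem IsCompact.exists_isOpen_superset_setLIntegral_lt_top {X : Type*} [TopologicalSpace X]
    [MeasurableSpace X] {μ : Measure X} {f : X → ENNReal} {K : Set X} (hK : IsCompact K)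
    (hf : ∀ z ∈ K, ∃ U, IsOpen U ∧ z ∈ U ∧ ∫⁻ x in U, f x ∂μ < ⊤) :
    ∃ U, IsOpen U ∧ K ⊆ U ∧ ∫⁻ x in U, f x ∂μ < ⊤ := by
  refine hK.induction_on ⟨∅, isOpen_empty, subset_rfl, by simp⟩ ?_ ?_ ?_
  · rintro s t hst ⟨U, hUo, htU, hU⟩
    exact ⟨U, hUo, hst.trans htU, hU⟩
  · rintro s t ⟨U, hUo, hsU, hU⟩ ⟨V, hVo, htV, hV⟩
    exact ⟨U ∪ V, hUo.union hVo, Set.union_subset_union hsU htV,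
      (lintegral_union_le f U V).trans_lt (ENNReal.add_lt_top.2 ⟨hU, hV⟩)⟩
  · intro z hz
    obtain ⟨U, hUo, hzU, hU⟩ := hf z hz
    exact ⟨U, mem_nhdsWithin_of_mem_nhds (hUo.mem_nhds hzU), U, hUo, subset_rfl, hU⟩

theorem exp_neg_mul_le_one_add_exp_neg_mul {r r' : ℝ} (hr : 0 ≤ r) (hrr' : r ≤ r') (t : ℝ) :
    Real.exp (-2 * r * t) ≤ 1 + Real.exp (-2 * r' * t) := by
  rcases le_total 0 t with ht | ht
  · have : Real.exp (-2 * r * t) ≤ 1 := Real.exp_le_one_iff.2 (by nlinarith)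
    linarith [Real.exp_pos (-2 * r' * t)]
  · have : Real.exp (-2 * r * t) ≤ Real.exp (-2 * r' * t) := Real.exp_le_exp.2 (by nlinarith)
    linarith

theorem expw_le_one_add_expw {r r' : ℝ} (hr : 0 ≤ r) (hrr' : r ≤ r') (x : EReal) :
    expw r x ≤ 1 + expw r' x := by
  by_cases hx : x = ⊥
  · simp [expw, hx]
  · simp only [expw, if_neg hx]
    rw [← ENNReal.ofReal_one, ← ENNReal.ofReal_add zero_le_one (Real.exp_pos _).le]
    exact ENNReal.ofReal_le_ofReal (exp_neg_mul_le_one_add_exp_neg_mul hr hrr' _)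

theorem setLIntegral_expw_lt_top_of_le {X : Type*} [MeasurableSpace X] {μ : Measure X}
    {g : X → EReal} {S : Set X} {r r' : ℝ} (hr : 0 ≤ r) (hrr' : r ≤ r') (hS : μ S < ⊤)
    (h : ∫⁻ x in S, expw r' (g x) ∂μ < ⊤) : ∫⁻ x in S, expw r (g x) ∂μ < ⊤ :=
  calc ∫⁻ x in S, expw r (g x) ∂μ
      ≤ ∫⁻ x in S, (1 + expw r' (g x)) ∂μ := 
        lintegral_mono fun x => expw_le_one_add_expw hr hrr' _
    _ = μ S + ∫⁻ x in S, expw r' (g x) ∂μ := by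
        rw [lintegral_add_left measurable_const, setLIntegral_one]
    _ < ⊤ := ENNReal.add_lt_top.2 ⟨hS, h⟩

theorem exists_isOpen_setLIntegral_expw_lt_top_of_le {X : Type*} [TopologicalSpace X]
    [MeasurableSpace X] {μ : Measure X} [IsLocallyFiniteMeasure μ]
    {g : X → EReal} {U : Set X} {z : X} {r r' : ℝ} (hr : 0 ≤ r) (hrr' : r ≤ r')
    (hUo : IsOpen U) (hzU : z ∈ U) (hU : ∫⁻ x in U, expw r' (g x) ∂μ < ⊤) :
    ∃ V, IsOpen V ∧ z ∈ V ∧ ∫⁻ x in V, expw r (g x) ∂μ < ⊤ := by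
  obtain ⟨W, hzW, hWo, hW⟩ := μ.exists_isOpen_measure_lt_top z
  refine ⟨U ∩ W, hUo.inter hWo, ⟨hzU, hzW⟩, setLIntegral_expw_lt_top_of_le hr hrr'
    ((measure_mono Set.inter_subset_right).trans_lt hW) ?_⟩
  exact (lintegral_mono_set Set.inter_subset_left).trans_lt hU

section cse

variable {n : ℕ} (φ : Cn n → EReal)

theorem cse_anti {K K' : Set (Cn n)} (h : K ⊆ K') : cse φ K' ≤ cse φ K :=
  sSup_le_sSup fun _ ⟨r, hr, hc, U, hUo, hK'U, hU⟩ => ⟨r, hr, hc, U, hUo, h.trans hK'U, hU⟩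

variable {φ}

theorem ofReal_le_cse {K U : Set (Cn n)} {r : ℝ} (hr : 0 ≤ r) (hUo : IsOpen U) (hKU : K ⊆ U)
    (hU : ∫⁻ z in U, expw r (φ z) < ⊤) : ENNReal.ofReal r ≤ cse φ K :=
  le_sSup ⟨r, hr, rfl, U, hUo, hKU, hU⟩

theorem lt_cse_iff {K : Set (Cn n)} {c : ENNReal} :
    c < cse φ K ↔ ∃ r : ℝ, 0 ≤ r ∧ c < ENNReal.ofReal r ∧
      ∃ U, IsOpen U ∧ K ⊆ U ∧ ∫⁻ z in U, expw r (φ z) < ⊤ := by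
  refine ⟨fun h => ?_, fun ⟨r, hr, hcr, U, hUo, hKU, hU⟩ =>
    hcr.trans_le (ofReal_le_cse hr hUo hKU hU)⟩
  obtain ⟨_, ⟨r, hr, rfl, hU⟩, hcr⟩ := lt_sSup_iff.1 h
  exact ⟨r, hr, hcr, hU⟩

variable (φ)

theorem cse_eq_iInf_cse_singleton {K : Set (Cn n)} (hK : IsCompact K) :
    cse φ K = ⨅ z ∈ K, cse φ {z} := by
  refine le_antisymm (le_iInf₂ fun z hz => cse_anti φ (Set.singleton_subset_iff.2 hz)) ?_
  refine le_of_forall_lt fun c hc => ?_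
  obtain ⟨r, hr, hcr, hr_lt⟩ := ENNReal.lt_iff_exists_real_btwn.1 hc
  have hloc : ∀ z ∈ K, ∃ U, IsOpen U ∧ z ∈ U ∧ ∫⁻ w in U, expw r (φ w) < ⊤ := by
    intro z hz
    obtain ⟨r', -, hrr', U, hUo, hzU, hU⟩ := lt_cse_iff.1 (hr_lt.trans_le (iInf₂_le z hz))
    have hr_le_r' : r ≤ r' := ((ENNReal.ofReal_lt_ofReal_iff_of_nonneg hr).1 hrr').le
    exact exists_isOpen_setLIntegral_expw_lt_top_of_le hr hr_le_r' hUo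
      (Set.singleton_subset_iff.1 hzU) hU
  obtain ⟨U, hUo, hKU, hU⟩ := hK.exists_isOpen_superset_setLIntegral_lt_top hloc
  exact hcr.trans_le (ofReal_le_cse hr hUo hKU hU)

theorem lowerSemicontinuous_cse_singleton : LowerSemicontinuous fun z => cse φ {z} := by
  intro z c hc
  obtain ⟨r, hr, hcr, U, hUo, hzU, hU⟩ := lt_cse_iff.1 hc
  filter_upwards [hUo.mem_nhds (Set.singleton_subset_iff.1 hzU)] with w hw
  exact hcr.trans_le (ofReal_le_cse hr hUo (Set.singleton_subset_iff.2 hw) hU)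

end cse

theorem cse_eq_iInf_general (n : ℕ) (Ω K : Set (Cn n))
    (hK : IsCompact K) (φ : Cn n → EReal) :
    cse φ K = (⨅ z ∈ K, cse φ {z}) ∧
    LowerSemicontinuousOn (fun z => cse φ {z}) Ω ∧
    (cse φ K ≤ 1 → ∃ z₀ ∈ K, cse φ {z₀} ≤ 1) := by
  have heq := cse_eq_iInf_cse_singleton φ hK
  have hlsc := lowerSemicontinuous_cse_singleton φ
  refine ⟨heq, hlsc.lowerSemicontinuousOn Ω, fun hle => ?_⟩
  obtain rfl | hKne := K.eq_empty_or_nonempty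
  · simp [heq] at hle
  · obtain ⟨z₀, hz₀, hmin⟩ := (hlsc.lowerSemicontinuousOn K).exists_isMinOn hKne hK
    exact ⟨z₀, hz₀, (le_iInf₂ fun z hz => hmin hz).trans (heq ▸ hle)⟩

/-- [DK00]. For a psh function `φ` on `Ω` and a compact `K ⊆ Ω`:
`c_K(φ) = inf_{z ∈ K} c_{{z}}(φ)`, the map `z ↦ c_{{z}}(φ)` is lower semicontinuous,
and in particular if `c_K(φ) ≤ 1` there is `z₀ ∈ K` with `c_{{z₀}}(φ) ≤ 1`. -/
theorem cse_eq_iInf (n : ℕ) (hn : 0 < n) (Ω K : Set (Cn n)) (hΩ : IsOpen Ω)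
    (hK : IsCompact K) (hKΩ : K ⊆ Ω) (φ : Cn n → EReal) (hφ : PshOn φ Ω) :
    cse φ K = (⨅ z ∈ K, cse φ {z}) ∧
    LowerSemicontinuousOn (fun z => cse φ {z}) Ω ∧
    (cse φ K ≤ 1 → ∃ z₀ ∈ K, cse φ {z₀} ≤ 1) :=
  cse_eq_iInf_general n Ω K hK φ
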